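/- arXiv:math/0408277 — 7 statements merged into one kernel-verified Lean document; each statement's English description precedes it below -/
import Mathlib

section
/- Every root class of groups is closed under extensions: if 𝒦 is a root class, G is a group, N is a normal subgroup of G such that N (as a group) belongs to 𝒦 and the quotient group G/N belongs to 𝒦, then G belongs to 𝒦. -/
open Pointwise

universe u

/-- A class of groups in universe `u`. -/
abbrev GroupClass : Type (u + 1) := ∀ (G : Type u) [Group G], Prop

/-- A class of groups is invariant under isomorphism. -/
def GroupClass.IsoInvariant (K : GroupClass.{u}) : Prop :=
  ∀ (G H : Type u) [Group G] [Group H], G ≃* H → K G → K H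

/-- A class of groups is closed under taking subgroups. -/
def GroupClass.SubgroupClosed (K : GroupClass.{u}) : Prop :=
  ∀ (G : Type u) [Group G], K G → ∀ H : Subgroup G, K H

/-- A class of groups is closed under binary direct products. -/
def GroupClass.ProdClosed (K : GroupClass.{u}) : Prop :=
  ∀ (A B : Type u) [Group A] [Group B], K A → K B → K (A × B)

/-- `K` is a root class: it is an isomorphism-invariant class of groups containing a
nontrivial group, closed under subgroups and finite direct products, and satisfying the
root condition on subnormal chains `C ⊴ B ⊴ A` of length two. -/
def IsRootClass (K : GroupClass.{u}) : Prop :=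
  K.IsoInvariant ∧
  (∃ (G : Type u) (_ : Group G), Nontrivial G ∧ K G) ∧
  K.SubgroupClosed ∧
  K.ProdClosed ∧
  (∀ (A : Type u) [Group A] (B : Subgroup A) [B.Normal] (C : Subgroup B) [C.Normal],
    K (A ⧸ B) → K ((B : Type u) ⧸ C) →
    ∃ (D : Subgroup A) (hD : D.Normal), D ≤ C.map B.subtype ∧ (letI := hD; K (A ⧸ D)))

/-- A group `G` is `K`-residual: every nonidentity element is excluded from some normal
subgroup with quotient in `K`. -/
def KResidual (K : GroupClass.{u}) (G : Type u) [Group G] : Prop :=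
  ∀ g : G, g ≠ 1 → ∃ (N : Subgroup G) (hN : N.Normal),
    (letI := hN; K (G ⧸ N)) ∧ g ∉ N

/-- A subgroup `H` of `A` is `K`-closed: every element of `A` outside `H` avoids the set
`N * H` for some normal subgroup `N` of `A` with `A ⧸ N ∈ K`. -/
def KClosed (K : GroupClass.{u}) {A : Type u} [Group A] (H : Subgroup A) : Prop :=
  ∀ a : A, a ∉ H → ∃ (N : Subgroup A) (hN : N.Normal),
    (letI := hN; K (A ⧸ N)) ∧ a ∉ (N : Set A) * (H : Set A)

/-- every root class is closed under extensions. -/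
theorem rootClass_closed_under_extensions (K : GroupClass.{u}) (hK : IsRootClass K)
    (G : Type u) [Group G] (N : Subgroup G) [N.Normal]
    (hN : K N) (hQ : K (G ⧸ N)) : K G := by
  obtain ⟨hIso, -, -, -, hRoot⟩ := hK
  have hBot : K ((N : Type u) ⧸ (⊥ : Subgroup N)) :=
    hIso N _ (QuotientGroup.quotientBot (G := N)).symm hN
  obtain ⟨D, hD, hle, hKD⟩ := hRoot G N (⊥ : Subgroup N) hQ hBot
  have hDbot : D = ⊥ := le_bot_iff.mp (by simpa using hle)
  subst hDbot
  exact hIso _ G (QuotientGroup.quotientBot (G := G)) hKD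
end

section
/- Lemma, part 1: Let 𝒦 be a root class. If a group G has a finite subnormal series 1 = G₀ ◁ G₁ ◁ ⋯ ◁ Gₙ = G all of whose factors G_{i+1}/G_i belong to 𝒦, then G belongs to 𝒦. -/
open Pointwise

universe u

namespace IsRootClass

variable {K : GroupClass.{u}}

theorem of_subsingleton (hK : IsRootClass K) (T : Type u) [Group T] [Subsingleton T] : K T := by
  obtain ⟨hiso, ⟨G, _, -, hG⟩, hsub, -, -⟩ := hK
  have : Unique T := ⟨⟨1⟩, fun _ => Subsingleton.elim _ _⟩
  exact hiso _ _ (MulEquiv.ofUnique (M := (⊥ : Subgroup G))) (hsub G hG ⊥)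

/-- Extension closure: the root condition applied to the chain `1 ⊴ B ⊴ A`. -/
theorem of_normal_of_quotient (hK : IsRootClass K) {A : Type u} [Group A] (B : Subgroup A)
    [B.Normal] (hB : K B) (hQ : K (A ⧸ B)) : K A := by
  obtain ⟨hiso, -, -, -, hroot⟩ := hK
  obtain ⟨D, _, hDle, hD⟩ :=
    hroot A B ⊥ hQ (hiso _ _ (QuotientGroup.quotientBot (G := B)).symm hB)
  obtain rfl : D = ⊥ := le_bot_iff.mp (by simpa using hDle)
  exact hiso _ _ QuotientGroup.quotientBot hD

theorem of_le_of_subgroupOf_normal (hK : IsRootClass K) {G : Type u} [Group G]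
    {H L : Subgroup G} (hHL : H ≤ L) [(H.subgroupOf L).Normal] (hH : K H)
    (hQ : K (L ⧸ H.subgroupOf L)) : K L :=
  hK.of_normal_of_quotient _ (hK.1 _ _ (Subgroup.subgroupOfEquivOfLe hHL).symm hH) hQ

end IsRootClass

/-- Lemma, part 1: if a group `G` has a finite subnormal series
`⊥ = s 0 ⊴ s 1 ⊴ ⋯ ⊴ s n = ⊤` whose factors all belong to a root class `K`,
then `G` belongs to `K`. -/
theorem rootClass_of_subnormal_series (K : GroupClass.{u}) (hK : IsRootClass K)
    (G : Type u) [Group G] (n : ℕ) (s : Fin (n + 1) → Subgroup G)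
    (hbot : s 0 = ⊥) (htop : s (Fin.last n) = ⊤)
    (hle : ∀ i : Fin n, s i.castSucc ≤ s i.succ)
    (hnorm : ∀ i : Fin n, ((s i.castSucc).subgroupOf (s i.succ)).Normal)
    (hfac : ∀ i : Fin n,
      letI := hnorm i
      K ((s i.succ : Type u) ⧸ (s i.castSucc).subgroupOf (s i.succ))) :
    K G := by
  have hterms : ∀ i, K (s i) := by
    intro i
    induction i using Fin.induction with
    | zero => rw [hbot]; exact hK.of_subsingleton _
    | succ i ih =>
      have := hnorm i
      exact hK.of_le_of_subgroupOf_normal (hle i) ih (hfac i)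
  exact hK.1 _ _ Subgroup.topEquiv (htop ▸ hterms (Fin.last n))
end

section
/- Lemma, part 2: Let 𝒦 be a root class. If F is a normal subgroup of a group G such that the quotient G/F belongs to 𝒦 and F (as a group) is 𝒦-residual, then G is 𝒦-residual. -/
open Pointwise

universe u

/-- Lemma, part 2: if `F ⊴ G`, `G ⧸ F ∈ K` and `F` is `K`-residual
for a root class `K`, then `G` is `K`-residual. -/
theorem kResidual_of_normal_of_quotient_mem (K : GroupClass.{u}) (hK : IsRootClass K)
    (G : Type u) [Group G] (F : Subgroup G) [F.Normal]
    (hQ : K (G ⧸ F)) (hF : KResidual K F) : KResidual K G := by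
  intro g hg
  by_cases hgF : g ∈ F
  · -- g ∈ F, use residuality of F plus root condition
    obtain ⟨M, hM, hKM, hgM⟩ := hF ⟨g, hgF⟩ (by simpa using hg)
    obtain ⟨D, hD, hDle, hKD⟩ := hK.2.2.2.2 G F M hQ hKM
    refine ⟨D, hD, hKD, fun hgD => ?_⟩
    obtain ⟨m, hm, hme⟩ := hDle hgD
    apply hgM
    have : m = ⟨g, hgF⟩ := Subtype.ext hme
    rwa [this] at hm
  · exact ⟨F, inferInstance, hQ, hgF⟩
end

section
/- If a root class 𝒦 contains a nontrivial finite cyclic group, then there exists a prime p such that 𝒦 contains every finite p-group. -/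
open Pointwise

universe u

/-- if a root class `K` contains a nontrivial finite cyclic group, then there
is a prime `p` such that `K` contains every finite `p`-group. -/
theorem rootClass_of_finite_cyclic_mem (K : GroupClass.{u}) (hK : IsRootClass K)
    (hC : ∃ (C : Type u) (_ : Group C), IsCyclic C ∧ Finite C ∧ Nontrivial C ∧ K C) :
    ∃ p : ℕ, p.Prime ∧ ∀ (G : Type u) [Group G], Finite G → IsPGroup p G → K G := by
  obtain ⟨hIso, -, hSub, -, hRoot⟩ := hK
  obtain ⟨C, _, hcyc, hfinC, hntC, hKC⟩ := hC
  have hCne : Nat.card C ≠ 1 := fun h =>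
    absurd (Nat.card_eq_one_iff_unique.mp h).1 (not_subsingleton C)
  obtain ⟨p, hp, hpdvd⟩ := Nat.exists_prime_and_dvd hCne
  haveI : Fact p.Prime := ⟨hp⟩
  obtain ⟨c, hc⟩ := exists_prime_orderOf_dvd_card' p hpdvd
  have hKP : K (Subgroup.zpowers c) := hSub C hKC _
  have hcardP : Nat.card (Subgroup.zpowers c) = p := by
    rw [Nat.card_zpowers, hc]
  haveI : IsCyclic (Subgroup.zpowers c) := isCyclic_of_prime_card hcardP
  refine ⟨p, hp, ?_⟩
  have main : ∀ n : ℕ, ∀ (G : Type u) [Group G], Finite G → IsPGroup p G →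
      Nat.card G = n → K G := by
    intro n
    induction n using Nat.strong_induction_on with
    | _ n ih =>
      intro G _ hfin hpG hcard
      by_cases h1 : Nat.card G = 1
      · haveI : Subsingleton G := (Nat.card_eq_one_iff_unique.mp h1).1
        have hKbot : K (⊥ : Subgroup C) := hSub C hKC ⊥
        exact hIso _ _
          { toFun := fun _ => 1
            invFun := fun _ => 1
            left_inv := fun x => Subsingleton.elim _ _
            right_inv := fun x => Subsingleton.elim _ _
            map_mul' := fun _ _ => (one_mul (1 : G)).symm } hKbot
      · haveI : Nontrivial G := by
          rw [← not_subsingleton_iff_nontrivial]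
          exact fun hs => h1 (Nat.card_eq_one_iff_unique.mpr ⟨hs, inferInstance⟩)
        haveI := hpG.center_nontrivial
        have hpc : IsPGroup p (Subgroup.center G) := hpG.to_subgroup _
        have hdvd : p ∣ Nat.card (Subgroup.center G) := by
          obtain ⟨k, hk⟩ := IsPGroup.iff_card.mp hpc
          rcases Nat.eq_zero_or_pos k with rfl | hk0
          · rw [pow_zero] at hk
            exact absurd (Nat.card_eq_one_iff_unique.mp hk).1
              (not_subsingleton (Subgroup.center G))
          · exact hk ▸ dvd_pow_self p hk0.ne'
        obtain ⟨z, hz⟩ := exists_prime_orderOf_dvd_card' p hdvd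
        set B := Subgroup.zpowers (z : G) with hBdef
        haveI hBn : B.Normal := by
          constructor
          intro x hx g
          have hxc : x ∈ Subgroup.center G := Subgroup.zpowers_le.mpr z.2 hx
          have hgx : g * x * g⁻¹ = x := by
            rw [Subgroup.mem_center_iff.mp hxc g, mul_inv_cancel_right]
          rwa [hgx]
        have hcardB : Nat.card B = p := by
          rw [hBdef, Nat.card_zpowers, Subgroup.orderOf_coe, hz]
        haveI : IsCyclic B := isCyclic_of_prime_card hcardB
        have hKB : K (B : Type u) :=
          hIso _ _ (mulEquivOfCyclicCardEq (by rw [hcardP, hcardB])) hKP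
        -- the quotient is a smaller p-group
        have hcardQ : Nat.card G = Nat.card (G ⧸ B) * p := by
          rw [← hcardB]; exact Subgroup.card_eq_card_quotient_mul_card_subgroup B
        have hlt : Nat.card (G ⧸ B) < n := by
          have hQpos : 0 < Nat.card (G ⧸ B) := Nat.card_pos
          have hp2 := hp.two_le
          nlinarith [hcard ▸ hcardQ]
        have hKQ : K (G ⧸ B) :=
          ih _ hlt (G ⧸ B) inferInstance (hpG.to_quotient B) rfl
        have hKBbot : K ((B : Type u) ⧸ (⊥ : Subgroup B)) :=
          hIso _ _ (QuotientGroup.quotientBot (G := B)).symm hKB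
        obtain ⟨D, hD, hDle, hKD⟩ := hRoot G B (⊥ : Subgroup B) hKQ hKBbot
        have hDbot : D = ⊥ := le_bot_iff.mp (by simpa using hDle)
        subst hDbot
        exact hIso _ _ (QuotientGroup.quotientBot (G := G)) hKD
  intro G _ hfin hpG
  exact main (Nat.card G) G hfin hpG rfl
end

section
/- Theorem 4, necessity: Let 𝒦 be a root class, A a group, and H a subgroup of A. If the generalized free square Q = A *_H A (the amalgamated free product of two copies of A amalgamating H via the identity map, i.e. the pushout of two copies of the inclusion H → A) is 𝒦-residual, then A is 𝒦-residual and H is a 𝒦-closed subgroup of A. -/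
open Pointwise

universe u

/-- Theorem 4, necessity: if the generalized free square `Q = A *_H A`
(the pushout of two copies of the inclusion `H → A`) is `K`-residual for a root class
`K`, then `A` is `K`-residual and `H` is a `K`-closed subgroup of `A`. -/
theorem kResidual_and_kClosed_of_free_square_kResidual (K : GroupClass.{u})
    (hK : IsRootClass K) (A : Type u) [Group A] (H : Subgroup A)
    (hQ : KResidual K (Monoid.PushoutI (fun _ : Bool => H.subtype))) :
    KResidual K A ∧ KClosed K H := by
  obtain ⟨hIso, -, hSub, hProd, -⟩ := hK
  set φ : Bool → (H →* A) := fun _ : Bool => H.subtype with hφ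
  have injφ : ∀ i, Function.Injective (φ i) := fun _ => H.subtype_injective
  have injof : ∀ i, Function.Injective (Monoid.PushoutI.of (φ := φ) i) :=
    Monoid.PushoutI.of_injective injφ
  constructor
  · -- A is K-residual
    intro g hg
    have hx : Monoid.PushoutI.of (φ := φ) true g ≠ 1 := by
      intro h
      exact hg (injof true (by simpa using h))
    obtain ⟨N, hN, hKN, hxN⟩ := hQ _ hx
    letI := hN
    let f : A →* (Monoid.PushoutI φ ⧸ N) :=
      (QuotientGroup.mk' N).comp (Monoid.PushoutI.of (φ := φ) true)
    refine ⟨f.ker, MonoidHom.normal_ker f, ?_, ?_⟩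
    · exact hIso _ _ (QuotientGroup.quotientKerEquivRange f).symm (hSub _ hKN f.range)
    · intro hgker
      have : Monoid.PushoutI.of (φ := φ) true g ∈ N := by
        have := MonoidHom.mem_ker.mp hgker
        simpa [f, QuotientGroup.eq_one_iff] using this
      exact hxN this
  · -- H is K-closed in A
    intro a ha
    have hq : (Monoid.PushoutI.of (φ := φ) false a)⁻¹ *
        Monoid.PushoutI.of (φ := φ) true a ≠ 1 := by
      intro h
      have heq : Monoid.PushoutI.of (φ := φ) true a =
          Monoid.PushoutI.of (φ := φ) false a := by
        rw [← mul_left_cancel_iff (a := (Monoid.PushoutI.of (φ := φ) false a)⁻¹)]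
        simpa using h
      have hmem : Monoid.PushoutI.of (φ := φ) true a ∈
          (Monoid.PushoutI.of (φ := φ) true).range ⊓
          (Monoid.PushoutI.of (φ := φ) false).range :=
        ⟨⟨a, rfl⟩, ⟨a, heq.symm⟩⟩
      rw [Monoid.PushoutI.inf_of_range_eq_base_range injφ (by simp)] at hmem
      obtain ⟨h₀, hh₀⟩ := hmem
      have : Monoid.PushoutI.of (φ := φ) true (φ true h₀) =
          Monoid.PushoutI.of (φ := φ) true a := by
        rw [Monoid.PushoutI.of_apply_eq_base φ true h₀, hh₀]
      have := injof true this
      exact ha (this ▸ h₀.2)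
    obtain ⟨N, hN, hKN, hqN⟩ := hQ _ hq
    letI := hN
    let f : A →* (Monoid.PushoutI φ ⧸ N) × (Monoid.PushoutI φ ⧸ N) :=
      MonoidHom.prod ((QuotientGroup.mk' N).comp (Monoid.PushoutI.of (φ := φ) true))
        ((QuotientGroup.mk' N).comp (Monoid.PushoutI.of (φ := φ) false))
    refine ⟨f.ker, MonoidHom.normal_ker f, ?_, ?_⟩
    · exact hIso _ _ (QuotientGroup.quotientKerEquivRange f).symm
        (hSub _ (hProd _ _ hKN hKN) f.range)
    · rintro ⟨n, hn, h, hh, rfl⟩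
      have hn1 : Monoid.PushoutI.of (φ := φ) true n ∈ N := by
        have := congrArg Prod.fst (MonoidHom.mem_ker.mp hn)
        simpa [f, QuotientGroup.eq_one_iff] using this
      have hn2 : Monoid.PushoutI.of (φ := φ) false n ∈ N := by
        have := congrArg Prod.snd (MonoidHom.mem_ker.mp hn)
        simpa [f, QuotientGroup.eq_one_iff] using this
      have hofh : Monoid.PushoutI.of (φ := φ) false h =
          Monoid.PushoutI.of (φ := φ) true h := by
        have h1 := Monoid.PushoutI.of_apply_eq_base φ true (⟨h, hh⟩ : H)
        have h2 := Monoid.PushoutI.of_apply_eq_base φ false (⟨h, hh⟩ : H)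
        simp only [hφ, Subgroup.coe_subtype] at h1 h2
        rw [h1, h2]
      apply hqN
      have : (Monoid.PushoutI.of (φ := φ) false (n * h))⁻¹ *
          Monoid.PushoutI.of (φ := φ) true (n * h) =
          (Monoid.PushoutI.of (φ := φ) true h)⁻¹ *
          ((Monoid.PushoutI.of (φ := φ) false n)⁻¹ *
            Monoid.PushoutI.of (φ := φ) true n) *
          Monoid.PushoutI.of (φ := φ) true h := by
        simp [map_mul, hofh, mul_assoc]
      rw [this]
      simpa using hN.conj_mem _ (N.mul_mem (N.inv_mem hn2) hn1)
        (Monoid.PushoutI.of (φ := φ) true h)⁻¹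
end

section
/- Remark after Theorem 4: Let 𝒦 be a class of groups (invariant under isomorphism) that is merely closed under taking subgroups and under finite direct products (i.e. satisfying only properties 1 and 2 of the definition of a root class). Let A be a group and H a subgroup of A. If the generalized free square Q = A *_H A (the pushout of two copies of the inclusion H → A) is 𝒦-residual, then A is 𝒦-residual and H is a 𝒦-closed subgroup of A. -/
open Pointwise

universe u

private lemma kquot_ker (K : GroupClass.{u}) (hiso : K.IsoInvariant)
    (hsub : K.SubgroupClosed) {A B : Type u} [Group A] [Group B]
    (f : A →* B) (hB : K B) : K (A ⧸ f.ker) :=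
  hiso _ _ (QuotientGroup.quotientKerEquivRange f).symm (hsub _ hB f.range)

/-- remark after Theorem 4: the necessity part of Theorem 4 holds for any
isomorphism-invariant class of groups `K` that is merely closed under subgroups and under
finite direct products: if the generalized free square `Q = A *_H A` (the pushout of two
copies of the inclusion `H → A`) is `K`-residual, then `A` is `K`-residual and `H` is a
`K`-closed subgroup of `A`. -/
theorem kResidual_and_kClosed_of_free_square_kResidual' (K : GroupClass.{u})
    (hiso : K.IsoInvariant) (hsub : K.SubgroupClosed) (hprod : K.ProdClosed)
    (A : Type u) [Group A] (H : Subgroup A)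
    (hQ : KResidual K (Monoid.PushoutI (fun _ : Bool => H.subtype))) :
    KResidual K A ∧ KClosed K H := by

  classical
  set φ : ∀ _ : Bool, (H : Type u) →* A := fun _ => H.subtype with hφdef
  have hinj : ∀ i, Function.Injective (φ i) := fun _ => H.subtype_injective
  have hofinj : ∀ i, Function.Injective (Monoid.PushoutI.of (φ := φ) i) :=
    Monoid.PushoutI.of_injective hinj
  constructor
  · intro a ha
    obtain ⟨N, hN, hK, hg⟩ := hQ (Monoid.PushoutI.of (φ := φ) true a)
      (by simpa using fun h => ha ((hofinj true) (h.trans (map_one _).symm)))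
    refine ⟨((QuotientGroup.mk' N).comp (Monoid.PushoutI.of (φ := φ) true)).ker,
      inferInstance, kquot_ker K hiso hsub _ hK, ?_⟩
    intro hmem
    exact hg ((QuotientGroup.eq_one_iff _).mp hmem)
  · intro a ha
    have hq : Monoid.PushoutI.of (φ := φ) true a *
        (Monoid.PushoutI.of (φ := φ) false a)⁻¹ ≠ 1 := by
      intro h
      have heq : Monoid.PushoutI.of (φ := φ) true a
          = Monoid.PushoutI.of (φ := φ) false a := by
        rwa [mul_inv_eq_one] at h
      have : Monoid.PushoutI.of (φ := φ) true a ∈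
          (Monoid.PushoutI.of (φ := φ) true).range ⊓
          (Monoid.PushoutI.of (φ := φ) false).range := by
        exact ⟨⟨a, rfl⟩, ⟨a, heq.symm⟩⟩
      rw [Monoid.PushoutI.inf_of_range_eq_base_range hinj (by simp)] at this
      obtain ⟨h, hh⟩ := this
      have : Monoid.PushoutI.of (φ := φ) true (φ true h)
          = Monoid.PushoutI.of (φ := φ) true a := by
        rw [Monoid.PushoutI.of_apply_eq_base, hh]
      exact ha ((hofinj true this) ▸ h.2)
    obtain ⟨N, hN, hK, hmem⟩ := hQ _ hq
    set f : A →* (_ ⧸ N) × (_ ⧸ N) :=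
      (((QuotientGroup.mk' N).comp (Monoid.PushoutI.of (φ := φ) true)).prod
        ((QuotientGroup.mk' N).comp (Monoid.PushoutI.of (φ := φ) false))) with hf
    refine ⟨f.ker, inferInstance, kquot_ker K hiso hsub f (hprod _ _ hK hK), ?_⟩
    rintro ⟨n, hn, h, hh, rfl⟩
    have hn1 : Monoid.PushoutI.of (φ := φ) true n ∈ N := by
      have := congrArg Prod.fst (hn : f n = 1)
      exact (QuotientGroup.eq_one_iff _).mp this
    have hn2 : Monoid.PushoutI.of (φ := φ) false n ∈ N := by
      have := congrArg Prod.snd (hn : f n = 1)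
      exact (QuotientGroup.eq_one_iff _).mp this
    have hbase : Monoid.PushoutI.of (φ := φ) true h
        = Monoid.PushoutI.of (φ := φ) false h := by
      have h1 := Monoid.PushoutI.of_apply_eq_base φ true ⟨h, hh⟩
      have h2 := Monoid.PushoutI.of_apply_eq_base φ false ⟨h, hh⟩
      simp only [hφdef, Subgroup.coe_subtype] at h1 h2
      rw [h1, h2]
    apply hmem
    have : Monoid.PushoutI.of (φ := φ) true (n * h) *
        (Monoid.PushoutI.of (φ := φ) false (n * h))⁻¹
        = Monoid.PushoutI.of (φ := φ) true n *
          (Monoid.PushoutI.of (φ := φ) false n)⁻¹ := by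
      simp only [map_mul, mul_inv_rev, hbase]
      group
    rw [this]
    exact N.mul_mem hn1 (N.inv_mem hn2)
end

section
/- Let A be a group, H a subgroup of A, and Q = A *_H A the generalized free square (the pushout of two copies of the inclusion H → A). For a normal subgroup N of A, let Q_N = (A/N) *_{HN/N} (A/N) be the generalized free square of A/N over the image HN/N of H, and let ε_N : Q → Q_N be the homomorphism extending the canonical projection A → A/N on each factor. Then for every g ∈ Q with g ≠ 1 such that Q is built from a 𝒦-residual group A with 𝒦-closed subgroup H (𝒦 a root class), there exists a normal subgroup N of A with A/N ∈ 𝒦 and ε_N(g) ≠ 1; i.e., Q is residually a group of the form Q_N with A/N ∈ 𝒦. -/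
open Pointwise

universe u

/-- The canonical homomorphism `ε_N : A *_H A →* (A/N) *_{HN/N} (A/N)` extending the
projection `A → A ⧸ N` on each factor of the generalized free square. -/
noncomputable def epsN {A : Type u} [Group A] (H : Subgroup A) (N : Subgroup A) [N.Normal] :
    Monoid.PushoutI (fun _ : Bool => H.subtype) →*
      Monoid.PushoutI (fun _ : Bool => (H.map (QuotientGroup.mk' N)).subtype) :=
  Monoid.PushoutI.lift
    (fun b =>
      (Monoid.PushoutI.of
        (φ := fun _ : Bool => (H.map (QuotientGroup.mk' N)).subtype) b).comp
        (QuotientGroup.mk' N))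
    ((Monoid.PushoutI.base
        (fun _ : Bool => (H.map (QuotientGroup.mk' N)).subtype)).comp
      ((QuotientGroup.mk' N).subgroupMap H))
    (fun b => by
      ext x
      exact Monoid.PushoutI.of_apply_eq_base
        (fun _ : Bool => (H.map (QuotientGroup.mk' N)).subtype) b
        (((QuotientGroup.mk' N)).subgroupMap H x))

/-! Write `g = h · x₁ ⋯ xₙ` in normal form: `h ∈ H`, and the letters `xᵢ ∉ H` alternate between
the two factors. If `n = 0` then `h ≠ 1`, residuality of `A` gives `N` with `h ∉ N`, and
`ε_N g ≠ 1` because `HN/N` embeds in `Q_N`. If `n > 0`: the normal subgroups `N` with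
`A/N ∈ K` are closed under finite intersections (`A/(N₁ ∩ N₂)` embeds in `A/N₁ × A/N₂`), so
`K`-closedness of `H` yields a single `N` with `xᵢ ∉ NH` for all `i`. The images of the `xᵢ`
then avoid `HN/N`, so `ε_N g` is `h̄` times a nonempty reduced word, which by the normal form
theorem in `Q_N` does not even lie in `HN/N`. -/

namespace Monoid.CoprodI.Word

variable {ι : Type*} {M M' : ι → Type*} [∀ i, Monoid (M i)] [∀ i, Monoid (M' i)]

def map (f : ∀ i, M i →* M' i) (w : Word M) (hw : ∀ l ∈ w.toList, f l.1 l.2 ≠ 1) :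
    Word M' where
  toList := w.toList.map fun l => ⟨l.1, f l.1 l.2⟩
  ne_one l hl := by
    obtain ⟨k, hk, rfl⟩ := List.mem_map.1 hl
    exact hw k hk
  chain_ne := (List.isChain_map _).2 w.chain_ne

theorem prod_map (f : ∀ i, M i →* M' i) (w : Word M) (hw : ∀ l ∈ w.toList, f l.1 l.2 ≠ 1) :
    (w.map f hw).prod = lift (fun i => of.comp (f i)) w.prod := by
  simp [map, prod, map_list_prod, List.map_map, Function.comp_def]

end Monoid.CoprodI.Word

namespace Monoid.PushoutI

open CoprodI

section Map

variable {ι : Type*} {G G' : ι → Type*} {H H' : Type*} [∀ i, Monoid (G i)] [Monoid H]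
  {φ : ∀ i, H →* G i}

theorem map_ofCoprodI_prod [∀ i, Monoid (G' i)] [Monoid H'] {ψ : ∀ i, H' →* G' i}
    (F : PushoutI φ →* PushoutI ψ) (f : ∀ i, G i →* G' i) (hF : ∀ i x, F (of i x) = of i (f i x))
    (w : Word G) (hw : ∀ l ∈ w.toList, f l.1 l.2 ≠ 1) :
    F (ofCoprodI w.prod) = ofCoprodI (w.map f hw).prod := by
  rw [Word.prod_map, ← MonoidHom.comp_apply, ← MonoidHom.comp_apply ofCoprodI]
  congr 1
  refine CoprodI.ext_hom _ _ fun i => ?_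
  ext x
  simp [ofCoprodI_of, hF]

theorem map_ofCoprodI_prod_notMem_range_base [∀ i, Group (G' i)] [Group H']
    {ψ : ∀ i, H' →* G' i} (hψ : ∀ i, Function.Injective (ψ i))
    (F : PushoutI φ →* PushoutI ψ) (f : ∀ i, G i →* G' i) (hF : ∀ i x, F (of i x) = of i (f i x))
    {w : Word G} (hw : w ≠ .empty) (hred : ∀ l ∈ w.toList, f l.1 l.2 ∉ (ψ l.1).range) :
    F (ofCoprodI w.prod) ∉ (base ψ).range := by
  have hne : ∀ l ∈ w.toList, f l.1 l.2 ≠ 1 := fun l hl h1 => hred l hl (h1 ▸ one_mem _)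
  have hred' : Reduced ψ (w.map f hne) := by
    intro l hl
    obtain ⟨k, hk, rfl⟩ := List.mem_map.1 hl
    exact hred k hk
  rw [map_ofCoprodI_prod F f hF w hne]
  intro hmem
  have := congrArg Word.toList (hred'.eq_empty_of_mem_range hψ hmem)
  exact hw (Word.ext (by simpa [Word.map, Word.empty] using this))

end Map

variable {ι : Type*} {G : ι → Type*} {H : Type*} [∀ i, Group (G i)] [Group H]
  {φ : ∀ i, H →* G i}

theorem NormalWord.reduced {d : NormalWord.Transversal φ} (w : NormalWord d) :
    Reduced φ w.toWord := by
  rintro ⟨i, g⟩ hg hrange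
  have hset : g ∈ d.set i := w.normalized i g hg
  have h1 := (d.compl i).equiv_snd_eq_self_of_mem_of_one_mem (one_mem _) hset
  rw [(d.compl i).equiv_snd_eq_one_of_mem_of_one_mem (d.one_mem i) hrange] at h1
  exact w.ne_one _ hg (congrArg Subtype.val h1).symm

theorem exists_reduced_base_mul_ofCoprodI_prod_eq (hφ : ∀ i, Function.Injective (φ i))
    (g : PushoutI φ) : ∃ (h : H) (w : Word G), Reduced φ w ∧ base φ h * ofCoprodI w.prod = g := by
  classical
  obtain ⟨d⟩ := NormalWord.transversal_nonempty φ hφ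
  let w := NormalWord.equiv (d := d) g
  exact ⟨w.head, w.toWord, w.reduced, NormalWord.equiv.symm_apply_apply g⟩

end Monoid.PushoutI

namespace GroupClass

variable {K : GroupClass.{u}} {A : Type u} [Group A]

theorem quotient_ker (hiso : K.IsoInvariant) (hsub : K.SubgroupClosed) {G : Type u} [Group G]
    (f : A →* G) (hG : K G) : K (A ⧸ f.ker) :=
  hiso _ _ (QuotientGroup.quotientKerEquivRange f).symm (hsub G hG f.range)

theorem quotient_inf (hiso : K.IsoInvariant) (hsub : K.SubgroupClosed) (hprod : K.ProdClosed)
    {N₁ N₂ : Subgroup A} [N₁.Normal] [N₂.Normal] (h₁ : K (A ⧸ N₁)) (h₂ : K (A ⧸ N₂)) :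
    K (A ⧸ (N₁ ⊓ N₂)) := by
  let f := (QuotientGroup.mk' N₁).prod (QuotientGroup.mk' N₂)
  have hker : f.ker = N₁ ⊓ N₂ := by
    ext a
    simp [f, MonoidHom.mem_ker, Prod.ext_iff]
  exact hiso _ _ (QuotientGroup.quotientMulEquivOfEq hker)
    (quotient_ker hiso hsub f (hprod _ _ h₁ h₂))

theorem quotient_top (hiso : K.IsoInvariant) (hsub : K.SubgroupClosed)
    {G : Type u} [Group G] (hG : K G) : K (A ⧸ (⊤ : Subgroup A)) :=
  hiso _ _ (QuotientGroup.quotientMulEquivOfEq MonoidHom.ker_one)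
    (quotient_ker hiso hsub (1 : A →* G) hG)

end GroupClass

theorem QuotientGroup.mk_mem_map_mk'_iff {A : Type*} [Group A] (H N : Subgroup A) [N.Normal]
    (a : A) : (a : A ⧸ N) ∈ H.map (QuotientGroup.mk' N) ↔ a ∈ (N : Set A) * H := by
  rw [← QuotientGroup.mk'_apply, ← Subgroup.mem_comap, Subgroup.comap_map_eq,
    QuotientGroup.ker_mk', sup_comm, ← SetLike.mem_coe, Subgroup.normal_mul]

theorem KClosed.exists_forall_notMem_mul {K : GroupClass.{u}} (hK : IsRootClass K)
    {A : Type u} [Group A] {H : Subgroup A} (hH : KClosed K H) (l : List A)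
    (hl : ∀ a ∈ l, a ∉ H) : ∃ (N : Subgroup A) (hN : N.Normal),
      (letI := hN; K (A ⧸ N)) ∧ ∀ a ∈ l, a ∉ (N : Set A) * H := by
  obtain ⟨hiso, ⟨G, _, -, hG⟩, hsub, hprod, -⟩ := hK
  induction l with
  | nil => exact ⟨⊤, inferInstance, GroupClass.quotient_top hiso hsub hG, by simp⟩
  | cons a l ih =>
    obtain ⟨N₁, hN₁, hK₁, h₁⟩ := ih fun b hb => hl b (List.mem_cons_of_mem a hb)
    obtain ⟨N₂, hN₂, hK₂, h₂⟩ := hH a (hl a List.mem_cons_self)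
    refine ⟨N₁ ⊓ N₂, inferInstance, GroupClass.quotient_inf hiso hsub hprod hK₁ hK₂, ?_⟩
    rintro b hb hmem
    rcases List.mem_cons.1 hb with rfl | hb
    · exact h₂ (Set.mul_subset_mul_right inf_le_right hmem)
    · exact h₁ b hb (Set.mul_subset_mul_right inf_le_left hmem)

section epsN

open Monoid.PushoutI

variable {A : Type u} [Group A] (H N : Subgroup A) [N.Normal]

theorem epsN_of (b : Bool) (a : A) :
    epsN H N (of b a) = of (φ := fun _ => (H.map (QuotientGroup.mk' N)).subtype) b a := by
  simp [epsN, lift_of]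

theorem epsN_base (h : H) :
    epsN H N (base _ h) = base _ ((QuotientGroup.mk' N).subgroupMap H h) := by
  simp [epsN, lift_base]

theorem epsN_base_ne_one {h : H} (hh : (h : A) ∉ N) : epsN H N (base _ h) ≠ 1 := by
  rw [epsN_base, (base_injective fun _ => Subgroup.subtype_injective _).ne_iff' (map_one _)]
  exact fun h1 => hh ((QuotientGroup.eq_one_iff _).1 (congrArg Subtype.val h1))

theorem epsN_base_mul_ofCoprodI_prod_ne_one (h : H) {w : Monoid.CoprodI.Word fun _ : Bool => A}
    (hw : w ≠ .empty) (hletters : ∀ l ∈ w.toList, l.2 ∉ (N : Set A) * H) :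
    epsN H N (base _ h * ofCoprodI w.prod) ≠ 1 := by
  have hreduced : ∀ l ∈ w.toList,
      QuotientGroup.mk' N l.2 ∉ (H.map (QuotientGroup.mk' N)).subtype.range := by
    intro l hl
    rw [Subgroup.range_subtype, QuotientGroup.mk'_apply, QuotientGroup.mk_mem_map_mk'_iff]
    exact hletters l hl
  intro h1
  rw [map_mul, epsN_base] at h1
  refine map_ofCoprodI_prod_notMem_range_base (fun _ => Subgroup.subtype_injective _)
    (epsN H N) (fun _ => QuotientGroup.mk' N) (epsN_of H N) hw hreduced ?_
  exact (Subgroup.mul_mem_cancel_left _ (MonoidHom.mem_range.2 ⟨_, rfl⟩)).1 (h1 ▸ one_mem _)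

end epsN

/-- if `A` is `K`-residual and `H ≤ A` is `K`-closed (`K` a root class),
then for every nonidentity element `g` of the generalized free square `Q = A *_H A`
there is a normal subgroup `N` of `A` with `A ⧸ N ∈ K` and `ε_N g ≠ 1`; that is, `Q` is
residually a group of the form `Q_N = (A/N) *_{HN/N} (A/N)` with `A ⧸ N ∈ K`. -/
theorem free_square_residually_QN (K : GroupClass.{u}) (hK : IsRootClass K)
    (A : Type u) [Group A] (H : Subgroup A)
    (hA : KResidual K A) (hH : KClosed K H) :
    ∀ g : Monoid.PushoutI (fun _ : Bool => H.subtype), g ≠ 1 →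
      ∃ (N : Subgroup A) (hN : N.Normal),
        (letI := hN; K (A ⧸ N)) ∧ (letI := hN; epsN H N g ≠ 1) := by
  intro g hg
  obtain ⟨h, w, hw, rfl⟩ := Monoid.PushoutI.exists_reduced_base_mul_ofCoprodI_prod_eq
    (fun _ => H.subtype_injective) g
  by_cases hempty : w = .empty
  · subst hempty
    rw [Monoid.CoprodI.Word.prod_empty, map_one, mul_one] at hg ⊢
    obtain ⟨N, hN, hKN, hhN⟩ := hA h fun h1 => hg (by rw [OneMemClass.coe_eq_one.1 h1, map_one])
    exact ⟨N, hN, hKN, epsN_base_ne_one H N hhN⟩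
  · obtain ⟨N, hN, hKN, hNH⟩ := hH.exists_forall_notMem_mul hK (w.toList.map (·.2))
      (List.forall_mem_map.2 fun l hl => by simpa using hw l hl)
    exact ⟨N, hN, hKN, epsN_base_mul_ofCoprodI_prod_ne_one H N h hempty
      fun l hl => hNH _ (List.mem_map_of_mem hl)⟩
end
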